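/- If x ∈ {0,1}^∞ is μ-normal for a Borel probability measure μ on Cantor space, then μ is invariant under the left shift T, and dim_FS(x) = Dim_FS(x) = H⁺(μ) = H⁻(μ). -/

import Mathlib

open MeasureTheory Filter Topology Real
open scoped ENNReal

noncomputable section

abbrev Cantor := ℕ → Bool

/-- `j`-fold left shift of a binary sequence. -/
def shiftk (x : Cantor) (j : ℕ) : Cantor := fun i => x (i + j)

/-- the left shift `T`. -/
def Tshift (x : Cantor) : Cantor := fun i => x (i + 1)

/-- binary evaluation map `v`. -/
noncomputable def eval (x : Cantor) : ℝ := ∑' i : ℕ, if x i then ((2:ℝ) ^ (i + 1))⁻¹ else 0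

noncomputable def negMulLog2 (p : ℝ) : ℝ := - p * Real.logb 2 p

/-- sliding count probability of a word `w` of length `l` in the prefix `x_0^{n-1}`. -/
noncomputable def slidingP (x : Cantor) (n l : ℕ) (w : Fin l → Bool) : ℝ :=
  (((Finset.range (n - l + 1)).filter (fun i => ∀ j : Fin l, x (i + (j : ℕ)) = w j)).card : ℝ)
    / ((n - l + 1 : ℕ) : ℝ)

/-- sliding block entropy `H_l(x_0^{n-1})`. -/
noncomputable def slidingH (x : Cantor) (n l : ℕ) : ℝ :=
  (1 / (l : ℝ)) * ∑ w : Fin l → Bool, negMulLog2 (slidingP x n l w)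

/-- disjoint block probability `P^d`. -/
noncomputable def disjP (x : Cantor) (n l : ℕ) (w : Fin l → Bool) : ℝ :=
  (((Finset.range (n / l)).filter (fun i => ∀ j : Fin l, x (l * i + (j : ℕ)) = w j)).card : ℝ)
    / ((n / l : ℕ) : ℝ)

/-- disjoint block entropy `H^d_l(x_0^{n-1})`. -/
noncomputable def disjH (x : Cantor) (n l : ℕ) : ℝ :=
  (1 / (l : ℝ)) * ∑ w : Fin l → Bool, negMulLog2 (disjP x n l w)

/-- finite-state dimension via sliding block entropies. -/
noncomputable def dimFS (x : Cantor) : ℝ :=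
  ⨅ l : ℕ, Filter.liminf (fun n => slidingH x n (l + 1)) Filter.atTop

/-- finite-state strong dimension. -/
noncomputable def DimFS (x : Cantor) : ℝ :=
  ⨅ l : ℕ, Filter.limsup (fun n => slidingH x n (l + 1)) Filter.atTop

/-- cylinder set. -/
def Cyl (l : ℕ) (w : Fin l → Bool) : Set Cantor := {y | ∀ j : Fin l, y (j : ℕ) = w j}

/-- empirical measures `ν_n = n⁻¹ ∑_{j<n} δ_{T^j x}` on Cantor space. -/
noncomputable def empMeas (x : Cantor) (n : ℕ) : Measure Cantor :=
  (n : ℝ≥0∞)⁻¹ • ∑ j ∈ Finset.range n, Measure.dirac (shiftk x j)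

/-- weak convergence of a sequence of measures. -/
def WeakConv {α : Type*} [TopologicalSpace α] [MeasurableSpace α]
    (ν : ℕ → Measure α) (μ : Measure α) : Prop :=
  ∀ f : BoundedContinuousFunction α ℂ,
    Tendsto (fun n => ∫ y, f y ∂(ν n)) atTop (nhds (∫ y, f y ∂μ))

/-- block entropy `H_n(μ)` of a measure on Cantor space. -/
noncomputable def measH (μ : Measure Cantor) (n : ℕ) : ℝ :=
  ∑ w : Fin n → Bool, negMulLog2 ((μ (Cyl n w)).toReal)

/-- lower average entropy. -/
noncomputable def Hminus (μ : Measure Cantor) : ℝ :=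
  Filter.liminf (fun n => measH μ n / n) Filter.atTop

/-- upper average entropy. -/
noncomputable def Hplus (μ : Measure Cantor) : ℝ :=
  Filter.limsup (fun n => measH μ n / n) Filter.atTop

/-- set of subsequence weak limits of the empirical measures of `x`. -/
def Wx (x : Cantor) : Set (Measure Cantor) :=
  {μ | IsProbabilityMeasure μ ∧
      ∃ φ : ℕ → ℕ, StrictMono φ ∧ (∀ m, 0 < φ m) ∧
        WeakConv (fun m => empMeas x (φ m)) μ}

/-- normality of a binary sequence. -/
def IsNormal (x : Cantor) : Prop :=
  ∀ (l : ℕ) (w : Fin l → Bool),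
    Tendsto (fun n => slidingP x n l w) atTop (nhds (((2:ℝ) ^ l)⁻¹))

/-- Weyl averages `(1/n) ∑_{j<n} e^{2πik v(T^j x)}`. -/
noncomputable def weylAvg (x : Cantor) (k : ℤ) (n : ℕ) : ℂ :=
  (n : ℂ)⁻¹ * ∑ j ∈ Finset.range n,
    Complex.exp (2 * (Real.pi : ℂ) * Complex.I * (k : ℂ) * ((eval (shiftk x j) : ℝ) : ℂ))

/-- Weyl averages on the torus, `(1/n) ∑_{j<n} e^{2πik 2^j r}`. -/
noncomputable def weylAvgT (r : ℝ) (k : ℤ) (n : ℕ) : ℂ :=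
  (n : ℂ)⁻¹ * ∑ j ∈ Finset.range n,
    Complex.exp (2 * (Real.pi : ℂ) * Complex.I * (k : ℂ) * (((2:ℝ) ^ j * r : ℝ) : ℂ))

/-- empirical measures `(1/n) ∑_{j<n} δ_{2^j r mod 1}` on the torus. -/
noncomputable def empMeasT (r : ℝ) (n : ℕ) : Measure UnitAddCircle :=
  (n : ℝ≥0∞)⁻¹ • ∑ j ∈ Finset.range n, Measure.dirac (((2:ℝ) ^ j * r : ℝ) : UnitAddCircle)

/-- dyadic interval `[j/2^k, (j+1)/2^k)` on the torus. -/
def dyadicI (k j : ℕ) : Set UnitAddCircle :=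
  (fun t : ℝ => (t : UnitAddCircle)) '' Set.Ico ((j : ℝ) / 2 ^ k) (((j : ℝ) + 1) / 2 ^ k)

/-- a real number is a dyadic rational. -/
def IsDyadic (t : ℝ) : Prop := ∃ (a : ℤ) (n : ℕ), t = (a : ℝ) / 2 ^ n

/-- value of a finite binary word. -/
noncomputable def val2 (l : ℕ) (w : Fin l → Bool) : ℝ :=
  ∑ j : Fin l, if w j then ((2:ℝ) ^ ((j : ℕ) + 1))⁻¹ else 0

/-- dyadic interval `I_w` on the torus. -/
def IwT (l : ℕ) (w : Fin l → Bool) : Set UnitAddCircle :=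
  (fun t : ℝ => (t : UnitAddCircle)) '' Set.Ico (val2 l w) (val2 l w + ((2:ℝ) ^ l)⁻¹)

/-- value of a finite base-`m` word. -/
noncomputable def valm (m n : ℕ) (w : Fin n → Fin m) : ℝ :=
  ∑ j : Fin n, ((w j : ℕ) : ℝ) / (m : ℝ) ^ ((j : ℕ) + 1)

/-- base-`m` interval `I^m_w` on the torus. -/
def ImT (m n : ℕ) (w : Fin n → Fin m) : Set UnitAddCircle :=
  (fun t : ℝ => (t : UnitAddCircle)) '' Set.Ico (valm m n w) (valm m n w + ((m : ℝ) ^ n)⁻¹)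

/-- base-`m` partition entropy `H^m_n(μ)` (natural logarithm). -/
noncomputable def measHT (μ : Measure UnitAddCircle) (m n : ℕ) : ℝ :=
  ∑ w : Fin n → Fin m, Real.negMulLog ((μ (ImT m n w)).toReal)

/-- lower Rényi dimension w.r.t. partition factor `m`. -/
noncomputable def renyiLower (μ : Measure UnitAddCircle) (m : ℕ) : ℝ :=
  Filter.liminf (fun n => measHT μ m n / (n * Real.log m)) Filter.atTop

/-- upper Rényi dimension w.r.t. partition factor `m`. -/
noncomputable def renyiUpper (μ : Measure UnitAddCircle) (m : ℕ) : ℝ :=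
  Filter.limsup (fun n => measHT μ m n / (n * Real.log m)) Filter.atTop

/-! Occurrences of `0w` and `1w` in `x_0^{n-1}` are exactly the occurrences of `w` away from
position `0`, so their sliding frequencies differ by `O(1/n)` and μ-normality forces
`μ(C_{0w}) + μ(C_{1w}) = μ(C_w)`: the push-forward of `μ` under `T` agrees with `μ` on the
π-system of cylinders. For shift-invariant `μ` the first `m + n` letters split into the first `m`
and, after `T^m`, the next `n`, so `H_{m+n}(μ) ≤ H_m(μ) + H_n(μ)` (joint entropy is at most the
sum of the marginal entropies) and by Fekete `H_n(μ)/n` converges to `inf_n H_n(μ)/n`. Finally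
μ-normality gives `H_l(x_0^{n-1}) → H_l(μ)/l` for every `l`, so both finite-state dimensions equal
that infimum. -/

open Finset

lemma negMulLog2_eq_negMulLog_div (p : ℝ) : negMulLog2 p = negMulLog p / log 2 := by
  rw [negMulLog2, negMulLog, logb]
  ring

lemma continuous_negMulLog2 : Continuous negMulLog2 := by
  simpa only [funext negMulLog2_eq_negMulLog_div] using continuous_negMulLog.div_const _

lemma negMulLog2_nonneg {p : ℝ} (h0 : 0 ≤ p) (h1 : p ≤ 1) : 0 ≤ negMulLog2 p := by
  rw [negMulLog2_eq_negMulLog_div]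
  exact div_nonneg (negMulLog_nonneg h0 h1) (log_nonneg one_le_two)

def prefixMap (l : ℕ) (y : Cantor) : Fin l → Bool := fun j => y j

lemma cyl_eq_preimage_prefixMap (l : ℕ) (w : Fin l → Bool) : Cyl l w = prefixMap l ⁻¹' {w} := by
  ext y
  simp [Cyl, prefixMap, funext_iff]

lemma measurable_prefixMap (l : ℕ) : Measurable (prefixMap l) :=
  measurable_pi_lambda _ fun _ => measurable_pi_apply _

lemma measurableSet_cyl (l : ℕ) (w : Fin l → Bool) : MeasurableSet (Cyl l w) :=
  cyl_eq_preimage_prefixMap l w ▸ measurable_prefixMap l (measurableSet_singleton w)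

lemma measurable_Tshift : Measurable Tshift :=
  measurable_pi_lambda _ fun _ => measurable_pi_apply _

/-- `slidingP x n l w = occCount x l w (n - l + 1) / (n - l + 1)`. -/
def occCount (x : Cantor) (l : ℕ) (w : Fin l → Bool) (N : ℕ) : ℕ :=
  #{i ∈ range N | ∀ j : Fin l, x (i + j) = w j}

lemma occCount_le (x : Cantor) (l : ℕ) (w : Fin l → Bool) (N : ℕ) : occCount x l w N ≤ N :=
  (card_filter_le _ _).trans_eq (card_range N)

lemma occCount_succ (x : Cantor) (l : ℕ) (w : Fin l → Bool) (N : ℕ) :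
    occCount x l w (N + 1) =
      occCount (Tshift x) l w N + if ∀ j : Fin l, x j = w j then 1 else 0 := by
  rw [occCount, occCount, card_filter, card_filter, sum_range_succ']
  simp only [Tshift, zero_add, Nat.add_right_comm _ 1]
  rfl

lemma sum_occCount_cons (x : Cantor) (l : ℕ) (w : Fin l → Bool) (N : ℕ) :
    ∑ b, occCount x (l + 1) (Fin.cons b w) N = occCount (Tshift x) l w N := by
  simp only [occCount, card_filter]
  rw [sum_comm]
  refine sum_congr rfl fun i _ => ?_
  simp only [Fin.forall_fin_succ, Fin.val_zero, Fin.cons_zero, Fin.val_succ, Fin.cons_succ,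
    Tshift, add_zero, add_assoc, Fintype.sum_bool]
  cases x i <;> simp

lemma abs_div_sub_add_div_succ_le {c e N : ℝ} (hc : 0 ≤ c) (hcN : c ≤ N) (he : 0 ≤ e)
    (he1 : e ≤ 1) : |c / N - (c + e) / (N + 1)| ≤ 1 / (N + 1) := by
  rcases hc.trans hcN |>.eq_or_lt with rfl | hN
  · simp [le_antisymm hcN hc, abs_of_nonneg he, he1]
  have hN1 : 0 < N + 1 := by linarith
  rw [div_sub_div _ _ hN.ne' hN1.ne', abs_div, abs_of_pos (mul_pos hN hN1),
    div_le_div_iff₀ (mul_pos hN hN1) hN1]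
  have h : |c * (N + 1) - N * (c + e)| ≤ N := abs_le.2 ⟨by nlinarith, by nlinarith⟩
  nlinarith

lemma abs_sum_slidingP_cons_sub_le (x : Cantor) {l n : ℕ} (w : Fin l → Bool) (hn : l < n) :
    |∑ b, slidingP x n (l + 1) (Fin.cons b w) - slidingP x n l w| ≤ 1 / ((n - l : ℕ) + 1) := by
  obtain ⟨N, rfl⟩ := Nat.exists_eq_add_of_lt hn
  have h1 : l + N + 1 - (l + 1) + 1 = N + 1 := by omega
  have h2 : l + N + 1 - l = N + 1 := by omega
  unfold slidingP
  rw [h1, h2, ← sum_div]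
  change |(∑ b, (occCount x (l + 1) (Fin.cons b w) (N + 1) : ℝ)) / _
    - (occCount x l w (N + 1 + 1) : ℝ) / _| ≤ _
  rw [← Nat.cast_sum, sum_occCount_cons, occCount_succ x l w (N + 1)]
  push_cast
  refine abs_div_sub_add_div_succ_le (Nat.cast_nonneg _) ?_ ?_ ?_
  · exact_mod_cast occCount_le _ _ _ _
  all_goals split_ifs <;> norm_num

def prefixCylinders : Set (Set Cantor) := {S | ∃ l w, S = Cyl l w}

lemma cyl_inter_cyl_of_le {l l' : ℕ} (h : l ≤ l') (w : Fin l → Bool) (w' : Fin l' → Bool)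
    (hne : (Cyl l w ∩ Cyl l' w').Nonempty) : Cyl l w ∩ Cyl l' w' = Cyl l' w' := by
  obtain ⟨y, hy, hy'⟩ := hne
  refine Set.inter_eq_right.2 fun z hz j => ?_
  exact (hz ⟨j, j.2.trans_le h⟩).trans ((hy' ⟨j, j.2.trans_le h⟩).symm.trans (hy j))

lemma isPiSystem_prefixCylinders : IsPiSystem prefixCylinders := by
  rintro _ ⟨l, w, rfl⟩ _ ⟨l', w', rfl⟩ hne
  rcases le_total l l' with h | h
  · exact ⟨l', w', cyl_inter_cyl_of_le h w w' hne⟩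
  · rw [Set.inter_comm] at hne ⊢
    exact ⟨l, w, cyl_inter_cyl_of_le h w' w hne⟩

lemma generateFrom_prefixCylinders :
    MeasurableSpace.generateFrom prefixCylinders = (inferInstance : MeasurableSpace Cantor) := by
  refine le_antisymm (MeasurableSpace.generateFrom_le ?_) ?_
  · rintro _ ⟨l, w, rfl⟩
    exact measurableSet_cyl l w
  have hpre : ∀ l (S : Set (Fin l → Bool)),
      MeasurableSet[MeasurableSpace.generateFrom prefixCylinders] (prefixMap l ⁻¹' S) := by
    intro l S
    rw [← Set.biUnion_preimage_singleton]
    exact .biUnion S.to_countable fun w _ =>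
      MeasurableSpace.measurableSet_generateFrom ⟨l, w, (cyl_eq_preimage_prefixMap l w).symm⟩
  exact iSup_le fun i => MeasurableSpace.comap_le_iff_le_map.2 fun S _ =>
    hpre (i + 1) {w | w (Fin.last i) ∈ S}

lemma MeasureTheory.Measure.ext_of_cyl {μ ν : Measure Cantor} [IsFiniteMeasure μ]
    (h : ∀ l w, μ (Cyl l w) = ν (Cyl l w)) : μ = ν := by
  have huniv : Cyl 0 finZeroElim = Set.univ := by
    ext y
    simp [Cyl]
  refine ext_of_generate_finite prefixCylinders generateFrom_prefixCylinders.symm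
    isPiSystem_prefixCylinders ?_ (huniv ▸ h 0 finZeroElim)
  rintro _ ⟨l, w, rfl⟩
  exact h l w

lemma Tshift_preimage_cyl (l : ℕ) (w : Fin l → Bool) :
    Tshift ⁻¹' Cyl l w = ⋃ b, Cyl (l + 1) (Fin.cons b w) := by
  ext y
  simp [Cyl, Tshift, Fin.forall_fin_succ]

def IsMuNormal (μ : Measure Cantor) (x : Cantor) : Prop :=
  ∀ l w, Tendsto (fun n => slidingP x n l w) atTop (𝓝 (μ.real (Cyl l w)))

namespace IsMuNormal

variable {μ : Measure Cantor} {x : Cantor}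

lemma measureReal_preimage_Tshift_cyl [IsFiniteMeasure μ] (h : IsMuNormal μ x) (l : ℕ)
    (w : Fin l → Bool) : μ.real (Tshift ⁻¹' Cyl l w) = μ.real (Cyl l w) := by
  have hdisj : Pairwise fun b b' => Disjoint (Cyl (l + 1) (Fin.cons b w))
      (Cyl (l + 1) (Fin.cons b' w)) := fun b b' hbb' => by
    simp only [cyl_eq_preimage_prefixMap]
    exact Disjoint.preimage _ (Set.disjoint_singleton.2 fun h => hbb' (Fin.cons_inj.1 h).1)
  rw [Tshift_preimage_cyl, measureReal_iUnion_fintype hdisj fun _ => measurableSet_cyl _ _]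
  refine tendsto_nhds_unique (tendsto_finsetSum _ fun b _ => h (l + 1) (Fin.cons b w)) ?_
  have hdiff : Tendsto (fun n => ∑ b, slidingP x n (l + 1) (Fin.cons b w) - slidingP x n l w)
      atTop (𝓝 0) := by
    refine squeeze_zero_norm' ?_ (tendsto_one_div_add_atTop_nhds_zero_nat.comp
      (tendsto_sub_atTop_nat l))
    filter_upwards [eventually_gt_atTop l] with n hn
    exact abs_sum_slidingP_cons_sub_le x w hn
  simpa using hdiff.add (h l w)

lemma map_Tshift [IsFiniteMeasure μ] (h : IsMuNormal μ x) : μ.map Tshift = μ := by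
  refine Measure.ext_of_cyl fun l w => ?_
  rw [Measure.map_apply measurable_Tshift (measurableSet_cyl l w)]
  exact (ENNReal.toReal_eq_toReal_iff' (measure_ne_top _ _) (measure_ne_top _ _)).1
    (h.measureReal_preimage_Tshift_cyl l w)

lemma measurePreserving_Tshift [IsFiniteMeasure μ] (h : IsMuNormal μ x) :
    MeasurePreserving Tshift μ μ :=
  ⟨measurable_Tshift, h.map_Tshift⟩

lemma tendsto_slidingH (h : IsMuNormal μ x) (l : ℕ) :
    Tendsto (fun n => slidingH x n l) atTop (𝓝 (measH μ l / l)) := by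
  rw [measH, div_eq_inv_mul, ← one_div]
  exact (tendsto_finsetSum _ fun w _ =>
    (continuous_negMulLog2.tendsto _).comp (h l w)).const_mul _

end IsMuNormal

/-- Pointwise Gibbs inequality, from `log t ≤ t - 1` at `t = q / p`. -/
lemma Real.negMulLog_le_neg_mul_log_add_sub {p q : ℝ} (hp : 0 ≤ p) (hq : 0 ≤ q)
    (hpq : q = 0 → p = 0) : negMulLog p ≤ -(p * log q) + (q - p) := by
  rcases hp.eq_or_lt with rfl | hp
  · simpa using hq
  have hq : 0 < q := hq.lt_of_ne fun h => hp.ne' (hpq h.symm)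
  have key : p * log (q / p) ≤ p * (q / p - 1) :=
    mul_le_mul_of_nonneg_left (log_le_sub_one_of_pos (div_pos hq hp)) hp.le
  rw [log_div hq.ne' hp.ne', mul_sub, mul_sub, mul_div_cancel₀ _ hp.ne'] at key
  rw [negMulLog]
  linarith

/-- Subadditivity of Shannon entropy, by Gibbs' inequality against the product of the marginals. -/
lemma sum_negMulLog_le_add_of_marginals {α β : Type*} [Fintype α] [Fintype β]
    {P : α × β → ℝ} {A : α → ℝ} {B : β → ℝ} (hP : ∀ p, 0 ≤ P p) (hP1 : ∑ p, P p = 1)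
    (hPA : ∀ a, ∑ b, P (a, b) = A a) (hPB : ∀ b, ∑ a, P (a, b) = B b) :
    ∑ p, negMulLog (P p) ≤ ∑ a, negMulLog (A a) + ∑ b, negMulLog (B b) := by
  have hA : ∀ a, 0 ≤ A a := fun a => hPA a ▸ sum_nonneg fun b _ => hP (a, b)
  have hB : ∀ b, 0 ≤ B b := fun b => hPB b ▸ sum_nonneg fun a _ => hP (a, b)
  have hleA : ∀ a b, P (a, b) ≤ A a := fun a b =>
    hPA a ▸ single_le_sum (fun b _ => hP (a, b)) (mem_univ b)
  have hleB : ∀ a b, P (a, b) ≤ B b := fun a b =>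
    hPB b ▸ single_le_sum (fun a _ => hP (a, b)) (mem_univ a)
  have hA1 : ∑ a, A a = 1 := by simp only [← hPA, ← Fintype.sum_prod_type, hP1]
  have hB1 : ∑ b, B b = 1 := by simp only [← hPB, ← Fintype.sum_prod_type_right, hP1]
  have hlog : ∀ a b, P (a, b) * log (A a * B b) = P (a, b) * log (A a) + P (a, b) * log (B b) := by
    intro a b
    rcases (hP (a, b)).eq_or_lt with h | h
    · simp [← h]
    · rw [log_mul (h.trans_le (hleA a b)).ne' (h.trans_le (hleB a b)).ne', mul_add]
  have hgibbs : ∀ a b, negMulLog (P (a, b)) ≤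
      -(P (a, b) * log (A a)) - P (a, b) * log (B b) + (A a * B b - P (a, b)) := by
    intro a b
    rw [sub_eq_add_neg _ (P (a, b) * log (B b)), ← neg_add, ← hlog]
    refine negMulLog_le_neg_mul_log_add_sub (hP _) (mul_nonneg (hA a) (hB b)) fun h => ?_
    rcases mul_eq_zero.mp h with h | h
    · exact le_antisymm (h ▸ hleA a b) (hP _)
    · exact le_antisymm (h ▸ hleB a b) (hP _)
  calc ∑ p, negMulLog (P p)
      ≤ ∑ a, ∑ b, (-(P (a, b) * log (A a)) - P (a, b) * log (B b) + (A a * B b - P (a, b))) := by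
        rw [Fintype.sum_prod_type]
        exact sum_le_sum fun a _ => sum_le_sum fun b _ => hgibbs a b
    _ = ∑ a, negMulLog (A a) + ∑ b, negMulLog (B b) := by
        simp only [sum_add_distrib, sum_sub_distrib, ← sum_mul, ← mul_sum, sum_neg_distrib, hPA]
        rw [sum_comm (f := fun a b => P (a, b) * log (B b))]
        simp only [← sum_mul, hPB, hA1, hB1, negMulLog, neg_mul, sum_neg_distrib]
        ring

section Partition

variable {X α β : Type*} [MeasurableSpace X] [Fintype α] [MeasurableSpace α]
  [MeasurableSingletonClass α] [Fintype β] [MeasurableSpace β] [MeasurableSingletonClass β]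

lemma sum_measureReal_inter_preimage_singleton (μ : Measure X) [IsFiniteMeasure μ] {g : X → α}
    (hg : Measurable g) (s : Set X) :
    ∑ a, μ.real (s ∩ g ⁻¹' {a}) = μ.real s := by
  have h := sum_measureReal_preimage_singleton (μ := μ.restrict s) univ
    fun a _ => hg (measurableSet_singleton a)
  simpa [measureReal_restrict_apply (hg (measurableSet_singleton _)), Set.inter_comm] using h

lemma sum_negMulLog_measureReal_inter_le (μ : Measure X) [IsProbabilityMeasure μ] {f : X → α}
    {g : X → β} (hf : Measurable f) (hg : Measurable g) :
    ∑ p : α × β, negMulLog (μ.real (f ⁻¹' {p.1} ∩ g ⁻¹' {p.2})) ≤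
      ∑ a, negMulLog (μ.real (f ⁻¹' {a})) + ∑ b, negMulLog (μ.real (g ⁻¹' {b})) := by
  have hrow : ∀ a, ∑ b, μ.real (f ⁻¹' {a} ∩ g ⁻¹' {b}) = μ.real (f ⁻¹' {a}) := fun a =>
    sum_measureReal_inter_preimage_singleton μ hg _
  refine sum_negMulLog_le_add_of_marginals (fun _ => measureReal_nonneg) ?_ hrow fun b => ?_
  · rw [Fintype.sum_prod_type]
    simp only [hrow]
    simpa using sum_measureReal_inter_preimage_singleton μ hf Set.univ
  · simp only [Set.inter_comm (f ⁻¹' _)]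
    exact sum_measureReal_inter_preimage_singleton μ hf _

end Partition

lemma Tshift_iterate_apply (m : ℕ) (y : Cantor) (i : ℕ) : Tshift^[m] y i = y (i + m) := by
  induction m generalizing y with
  | zero => rfl
  | succ m ih => rw [Function.iterate_succ_apply, ih, Tshift, add_assoc]

lemma prefixMap_add (m n : ℕ) (y : Cantor) :
    prefixMap (m + n) y = Fin.appendEquiv m n (prefixMap m y, prefixMap n (Tshift^[m] y)) := by
  ext k
  refine Fin.addCases (fun i => ?_) (fun j => ?_) k
  · simp [prefixMap]
  · simp [prefixMap, Tshift_iterate_apply, add_comm]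

lemma measH_eq_sum_negMulLog_div (μ : Measure Cantor) (n : ℕ) :
    measH μ n = (∑ w, negMulLog (μ.real (prefixMap n ⁻¹' {w}))) / log 2 := by
  simp only [measH, negMulLog2_eq_negMulLog_div, sum_div, cyl_eq_preimage_prefixMap]
  rfl

lemma measH_nonneg (μ : Measure Cantor) [IsProbabilityMeasure μ] (n : ℕ) : 0 ≤ measH μ n :=
  sum_nonneg fun _ _ => negMulLog2_nonneg measureReal_nonneg measureReal_le_one

lemma subadditive_measH (μ : Measure Cantor) [IsProbabilityMeasure μ]
    (hT : MeasurePreserving Tshift μ μ) : Subadditive (measH μ) := by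
  intro m n
  simp only [measH_eq_sum_negMulLog_div, ← add_div]
  gcongr
  have hpre : ∀ p : (Fin m → Bool) × (Fin n → Bool), prefixMap (m + n) ⁻¹' {Fin.appendEquiv m n p}
      = prefixMap m ⁻¹' {p.1} ∩ (prefixMap n ∘ Tshift^[m]) ⁻¹' {p.2} := by
    rintro ⟨u, v⟩
    ext y
    simp only [Set.mem_preimage, Set.mem_singleton_iff, Set.mem_inter_iff, Function.comp_apply,
      prefixMap_add]
    rw [(Fin.appendEquiv m n).apply_eq_iff_eq, Prod.ext_iff]
  have hshift : ∀ v, μ.real ((prefixMap n ∘ Tshift^[m]) ⁻¹' {v}) = μ.real (prefixMap n ⁻¹' {v}) :=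
    fun v => (hT.iterate m).measureReal_preimage
      (measurable_prefixMap n (measurableSet_singleton v)).nullMeasurableSet
  calc ∑ w, negMulLog (μ.real (prefixMap (m + n) ⁻¹' {w}))
      = ∑ p : (Fin m → Bool) × (Fin n → Bool),
          negMulLog (μ.real (prefixMap m ⁻¹' {p.1} ∩ (prefixMap n ∘ Tshift^[m]) ⁻¹' {p.2})) := by
        rw [← (Fin.appendEquiv m n).sum_comp]
        simp only [hpre]
    _ ≤ _ := sum_negMulLog_measureReal_inter_le μ (measurable_prefixMap m)
        ((measurable_prefixMap n).comp (measurable_Tshift.iterate m))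
    _ = _ := by simp only [hshift]

lemma Subadditive.iInf_div_succ_eq_lim {u : ℕ → ℝ} (h : Subadditive u)
    (hbdd : BddBelow (Set.range fun n => u n / n)) :
    ⨅ n : ℕ, u (n + 1) / ((n + 1 : ℕ) : ℝ) = h.lim := by
  refine le_antisymm ?_ (le_ciInf fun n => h.lim_le_div hbdd n.succ_ne_zero)
  refine ge_of_tendsto ((h.tendsto_lim hbdd).comp (tendsto_add_atTop_nat 1))
    (Eventually.of_forall fun n => ciInf_le (hbdd.mono ?_) n)
  rintro _ ⟨k, rfl⟩
  exact ⟨k + 1, rfl⟩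

/-- μ-normality implies shift-invariance of μ and equality of the
finite-state dimensions with the average entropies of μ. -/
theorem mu_normal_shift_invariant_and_dims
    (x : Cantor) (μ : Measure Cantor) (hμ : IsProbabilityMeasure μ)
    (hnorm : ∀ (l : ℕ) (w : Fin l → Bool),
      Tendsto (fun n => slidingP x n l w) atTop (nhds ((μ (Cyl l w)).toReal))) :
    (∀ A : Set Cantor, MeasurableSet A → μ (Tshift ⁻¹' A) = μ A) ∧
    dimFS x = DimFS x ∧ dimFS x = Hplus μ ∧ Hplus μ = Hminus μ := by
  have hx : IsMuNormal μ x := hnorm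
  have hT := hx.measurePreserving_Tshift
  have hsub := subadditive_measH μ hT
  have hbdd : BddBelow (Set.range fun n => measH μ n / n) :=
    ⟨0, by rintro _ ⟨n, rfl⟩; exact div_nonneg (measH_nonneg μ n) n.cast_nonneg⟩
  have hH := hsub.tendsto_lim hbdd
  have hdim : dimFS x = hsub.lim :=
    (iInf_congr fun l => (hx.tendsto_slidingH (l + 1)).liminf_eq).trans
      (hsub.iInf_div_succ_eq_lim hbdd)
  have hDim : DimFS x = hsub.lim :=
    (iInf_congr fun l => (hx.tendsto_slidingH (l + 1)).limsup_eq).trans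
      (hsub.iInf_div_succ_eq_lim hbdd)
  exact ⟨fun A hA => hT.measure_preimage hA.nullMeasurableSet, hdim.trans hDim.symm,
    hdim.trans hH.limsup_eq.symm, hH.limsup_eq.trans hH.liminf_eq.symm⟩

end
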